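/- Let K be a cycle-free Markov kernel on a countable set G such that the graph on vertex set G with edge set {(u,v) : K(u,{v}) + K(v,{u}) > 0} is connected (weak irreducibility), and such that for every z ∈ G two independent Markov chains with kernel K started from z almost surely have a collision. Then, ℙ_G-almost surely, the graph of the CMT F with kernel K is connected (has a single connected component). -/

import Mathlib

open MeasureTheory

namespace CMTPaper

variable {G : Type*}

/-- The `n`-step kernel of a Markov kernel `K` on a countable set `G`:
`K^0(x,·) = δ_x` and `K^{n+1}(x,A) = Σ_y K(x,{y})·K^n(y,A)`. -/
noncomputable def nStep [MeasurableSpace G] (K : G → Measure G) : ℕ → G → Measure G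
  | 0 => fun x => Measure.dirac x
  | n + 1 => fun x => Measure.sum fun y => K x {y} • nStep K n y

/-- A kernel is cycle-free if `K^m(x,{x}) = 0` for every `x` and every `m ≥ 1`. -/
def CycleFree [MeasurableSpace G] (K : G → Measure G) : Prop :=
  ∀ x : G, ∀ m : ℕ, 1 ≤ m → nStep K m x {x} = 0

/-- `P` is the law on path space `G^ℕ` of the Markov chain with kernel `K` started at `x`
(characterized by its finite-dimensional cylinder probabilities). -/
def IsPathLaw [MeasurableSpace G] (K : G → Measure G) (x : G) (P : Measure (ℕ → G)) : Prop :=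
  ∀ (n : ℕ) (u : ℕ → G), u 0 = x →
    P {ω | ∀ i ≤ n, ω i = u i} = ∏ i ∈ Finset.range n, K (u i) {u (i + 1)}

/-- The set of collisions of two paths: pairs `(m,n)` with `m,n ≥ 1` and `ω m = ω' n`. -/
def collisions (ω ω' : ℕ → G) : Set (ℕ × ℕ) :=
  {p : ℕ × ℕ | 1 ≤ p.1 ∧ 1 ≤ p.2 ∧ ω p.1 = ω' p.2}

/-- `μ` is the law on `G^G` of the coalescing Markov trajectories (CMT) with kernel `K`,
i.e. the product measure `⊗_x K(x,·)` (characterized on cylinders). -/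
def IsCMTLaw [MeasurableSpace G] (K : G → Measure G) (μ : Measure (G → G)) : Prop :=
  ∀ (s : Finset G) (u : G → G), μ {f | ∀ x ∈ s, f x = u x} = ∏ x ∈ s, K x {u x}

/-- Adjacency in the graph of `f`: an edge between `x` and `f x` for every `x`. -/
def Adj (f : G → G) (a b : G) : Prop := f a = b ∨ f b = a

/-- `a` and `b` lie in the same connected component of the graph of `f`. -/
def SameComponent (f : G → G) (a b : G) : Prop := Relation.ReflTransGen (Adj f) a b

/-- The connected component of `v` in the graph of `f`. -/
def component (f : G → G) (v : G) : Set G := {u | SameComponent f u v}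

/-- The level set of `v`: points whose forward orbit merges with that of `v` after the same
number of steps. -/
def levelSet (f : G → G) (v : G) : Set G := {w | ∃ n : ℕ, f^[n] w = f^[n] v}

/-- The ancestor-line map `π (v, f) = (f^{(n)}(v))_{n ≥ 0}`. -/
def ancLine : G × (G → G) → ℕ → G := fun p n => p.2^[n] p.1

/-!
Fix an edge with `K u {v} ≠ 0`. If the ancestor lines of `u` and `v` under `F` meet, then `u` and
`v` lie in one component, and weak irreducibility chains such edges together; so it suffices
that the two ancestor lines meet almost surely.

As long as ancestor lines visit pairwise distinct vertices, they read distinct, independent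
coordinates of `F`, so up to that time they are distributed like independent Markov chains.
Hence a single ancestor line is a.s. injective, since its first repetition would be a return of
the chain, excluded by cycle-freeness. If the lines of `u` and `v` never met, they would
therefore look like chains from `u` and `v` that never meet. By the Markov property at time 1, a
chain from `u` moves to `v` with probability `K u {v} > 0` and then continues as a chain
from `v`, so this would contradict the almost sure collision of two independent chains from `u`.
-/

open Set Function
open scoped ENNReal

theorem measure_preimage_eq_of_fiber_eq {α β γ : Type*} [MeasurableSpace α] [MeasurableSpace β]
    [MeasurableSpace γ] [Countable γ] [MeasurableSingletonClass γ] {μ : Measure α}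
    {ν : Measure β} {F : α → γ} {H : β → γ} (hF : Measurable F) (hH : Measurable H) {C : Set γ}
    (h : ∀ c ∈ C, μ (F ⁻¹' {c}) = ν (H ⁻¹' {c})) : μ (F ⁻¹' C) = ν (H ⁻¹' C) := by
  rw [← tsum_measure_preimage_singleton C.to_countable fun c _ => hF (measurableSet_singleton c),
    ← tsum_measure_preimage_singleton C.to_countable fun c _ => hH (measurableSet_singleton c)]
  exact tsum_congr fun c => h c c.2

def pathPrefix (n : ℕ) (ω : ℕ → G) : Fin (n + 1) → G := fun i => ω i

def shift (ω : ℕ → G) : ℕ → G := fun n => ω (n + 1)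

lemma pathPrefix_succ (n : ℕ) (ω : ℕ → G) :
    pathPrefix (n + 1) ω = Fin.cons (ω 0) (pathPrefix n (shift ω)) := by
  ext i
  exact Fin.cases rfl (fun _ => rfl) i

lemma pathPrefix_surjective (n : ℕ) : Surjective (pathPrefix (G := G) n) := fun c =>
  ⟨fun i => if h : i < n + 1 then c ⟨i, h⟩ else c 0, funext fun i => dif_pos i.is_lt⟩

lemma preimage_pathPrefix_singleton (n : ℕ) (u : ℕ → G) :
    pathPrefix n ⁻¹' {pathPrefix n u} = {ω | ∀ i ≤ n, ω i = u i} := by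
  ext ω
  simp [pathPrefix, funext_iff, Fin.forall_iff]

lemma preimage_prodMap_shift_avoid :
    Prod.map id shift ⁻¹' {q : (ℕ → G) × (ℕ → G) | ∀ m n, 1 ≤ m → q.1 m ≠ q.2 n} =
      {q | (collisions q.1 q.2).Nonempty}ᶜ := by
  ext q
  simp only [mem_preimage, Prod.map_fst, Prod.map_snd, id, shift, mem_ofPred_eq, mem_compl_iff,
    collisions, Set.Nonempty, Prod.exists, not_exists, not_and]
  refine ⟨fun h m n hm hn => ?_, fun h m n hm => h m (n + 1) hm n.succ_pos⟩
  obtain ⟨n, rfl⟩ := Nat.exists_eq_succ_of_ne_zero (Nat.one_le_iff_ne_zero.mp hn)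
  exact h m n hm

section PathSpace

variable [MeasurableSpace G]

lemma measurable_pathPrefix (n : ℕ) : Measurable (pathPrefix (G := G) n) :=
  measurable_pi_lambda _ fun _ => measurable_pi_apply _

lemma measurable_shift : Measurable (shift (G := G)) :=
  measurable_pi_lambda _ fun _ => measurable_pi_apply _

noncomputable def pathWeight (K : G → Measure G) {n : ℕ} (c : Fin (n + 1) → G) : ℝ≥0∞ :=
  ∏ i : Fin n, K (c i.castSucc) {c i.succ}

lemma pathWeight_cons (K : G → Measure G) (x : G) {n : ℕ} (c : Fin (n + 1) → G) :
    pathWeight K (Fin.cons x c : Fin (n + 2) → G) = K x {c 0} * pathWeight K c := by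
  simp [pathWeight, Fin.prod_univ_succ]

lemma pathWeight_pathPrefix (K : G → Measure G) (n : ℕ) (u : ℕ → G) :
    pathWeight K (pathPrefix n u) = ∏ i ∈ Finset.range n, K (u i) {u (i + 1)} :=
  Fin.prod_univ_eq_prod_range (fun i => K (u i) {u (i + 1)}) n

namespace IsPathLaw

variable [MeasurableSingletonClass G] {K : G → Measure G} {x : G} {P : Measure (ℕ → G)}
  [IsProbabilityMeasure P]

lemma ae_eval_zero (hP : IsPathLaw K x P) : ∀ᵐ ω ∂P, ω 0 = x := by
  refine (ae_iff_measure_eq (p := fun ω : ℕ → G => ω 0 = x) ?_).2 ?_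
  · exact ((measurableSet_singleton x).preimage (measurable_pi_apply 0)).nullMeasurableSet
  · simpa using hP 0 (fun _ => x) rfl

open Classical in
lemma measure_pathPrefix_singleton (hP : IsPathLaw K x P) {n : ℕ} (c : Fin (n + 1) → G) :
    P (pathPrefix n ⁻¹' {c}) = if c 0 = x then pathWeight K c else 0 := by
  split_ifs with hc
  · obtain ⟨u, rfl⟩ := pathPrefix_surjective n c
    rw [preimage_pathPrefix_singleton, hP n u hc, pathWeight_pathPrefix]
  · refine measure_eq_zero_iff_ae_notMem.mpr (hP.ae_eval_zero.mono fun ω hω hmem => hc ?_)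
    rw [← hmem]
    exact hω

end IsPathLaw

variable [Countable G] [MeasurableSingletonClass G]

theorem ext_of_pathPrefix {ν ρ : Measure (ℕ → G)} [IsFiniteMeasure ν]
    (h : ∀ n (c : Fin (n + 1) → G), ν (pathPrefix n ⁻¹' {c}) = ρ (pathPrefix n ⁻¹' {c})) :
    ν = ρ := by
  have hpre (n : ℕ) (C : Set (Fin (n + 1) → G)) :
      ν (pathPrefix n ⁻¹' C) = ρ (pathPrefix n ⁻¹' C) :=
    measure_preimage_eq_of_fiber_eq (measurable_pathPrefix n) (measurable_pathPrefix n)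
      fun c _ => h n c
  refine ext_of_generate_finite _ generateFrom_measurableCylinders.symm
    isPiSystem_measurableCylinders ?_ (hpre 0 univ)
  intro t ht
  obtain ⟨s, S, -, rfl⟩ := (mem_measurableCylinders t).1 ht
  have hs (i : s) : (i : ℕ) < s.sup id + 1 := Nat.lt_succ_of_le (Finset.le_sup (f := id) i.2)
  exact hpre (s.sup id) {c | (fun i : s => c ⟨i, hs i⟩) ∈ S}

lemma measurableSet_avoid :
    MeasurableSet {q : (ℕ → G) × (ℕ → G) | ∀ m n, 1 ≤ m → q.1 m ≠ q.2 n} := by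
  simp only [ofPred_forall]
  exact .iInter fun m => .iInter fun n => .iInter fun _ =>
    (measurableSet_eq_fun (measurable_pi_apply m |>.comp measurable_fst)
      (measurable_pi_apply n |>.comp measurable_snd)).compl

end PathSpace

section MarkovChain

variable [MeasurableSpace G] [Countable G] [MeasurableSingletonClass G]
  {K : G → Measure G} {P : G → Measure (ℕ → G)} [∀ x, IsProbabilityMeasure (P x)]

theorem IsPathLaw.map_shift (hP : ∀ x, IsPathLaw K x (P x)) (x : G) :
    (P x).map shift = Measure.sum fun y => K x {y} • P y := by
  refine ext_of_pathPrefix fun n c => ?_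
  have hc := measurable_pathPrefix n (measurableSet_singleton c)
  have hfirst : shift ⁻¹' (pathPrefix n ⁻¹' {c}) =ᵐ[P x] pathPrefix (n + 1) ⁻¹' {Fin.cons x c} :=
    (hP x).ae_eval_zero.mono fun ω hω => propext <|
      show pathPrefix n (shift ω) = c ↔ pathPrefix (n + 1) ω = Fin.cons x c by
        rw [pathPrefix_succ, hω, (Fin.cons_right_injective (α := fun _ => G) x).eq_iff]
  rw [Measure.map_apply measurable_shift hc, measure_congr hfirst, Measure.sum_apply _ hc,
    (hP x).measure_pathPrefix_singleton, Fin.cons_zero, if_pos rfl, pathWeight_cons,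
    tsum_eq_single (c 0) fun y hy => ?_]
  · simp [(hP (c 0)).measure_pathPrefix_singleton]
  · simp [(hP y).measure_pathPrefix_singleton, Ne.symm hy]

theorem IsPathLaw.nStep_apply_singleton (hP : ∀ x, IsPathLaw K x (P x)) (n : ℕ) (x y : G) :
    nStep K n x {y} = P x {ω | ω n = y} := by
  induction n generalizing x with
  | zero =>
    have hstart : {ω : ℕ → G | ω 0 = y} =ᵐ[P x] {_ω | x = y} :=
      (hP x).ae_eval_zero.mono fun ω hω => show (ω 0 = y) = (x = y) by rw [hω]
    rw [nStep, Measure.dirac_apply' x (measurableSet_singleton y), measure_congr hstart]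
    by_cases h : x = y <;> simp [h]
  | succ n ih =>
    have hy : MeasurableSet {ω : ℕ → G | ω n = y} :=
      measurableSet_eq_fun (measurable_pi_apply n) measurable_const
    change _ = P x (shift ⁻¹' {ω | ω n = y})
    rw [← Measure.map_apply measurable_shift hy, IsPathLaw.map_shift hP, Measure.sum_apply _ hy,
      nStep, Measure.sum_apply _ (measurableSet_singleton y)]
    simp [ih]

theorem CycleFree.measure_revisit_eq_zero (hcf : CycleFree K) (hP : ∀ x, IsPathLaw K x (P x))
    {k m : ℕ} (hkm : k < m) (x : G) : P x {ω | ω k = ω m} = 0 := by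
  induction k generalizing m x with
  | zero =>
    have hstart : {ω : ℕ → G | ω 0 = ω m} =ᵐ[P x] {ω | ω m = x} :=
      (hP x).ae_eval_zero.mono fun ω hω =>
        show (ω 0 = ω m) = (ω m = x) by rw [hω, eq_comm (a := x)]
    rw [measure_congr hstart, ← IsPathLaw.nStep_apply_singleton hP, hcf x m hkm]
  | succ k ih =>
    obtain ⟨m, rfl⟩ : ∃ m', m = m' + 1 := ⟨m - 1, by omega⟩
    have hmeas : MeasurableSet {ω : ℕ → G | ω k = ω m} :=
      measurableSet_eq_fun (measurable_pi_apply k) (measurable_pi_apply m)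
    change P x (shift ⁻¹' {ω | ω k = ω m}) = 0
    rw [← Measure.map_apply measurable_shift hmeas, IsPathLaw.map_shift hP,
      Measure.sum_apply _ hmeas]
    simp [ih (Nat.lt_of_succ_lt_succ hkm)]

theorem measure_avoid_eq_zero (hP : ∀ x, IsPathLaw K x (P x)) {u v : G}
    (hcoll : ((P u).prod (P u)) {q | (collisions q.1 q.2).Nonempty} = 1) (huv : K u {v} ≠ 0) :
    ((P u).prod (P v)) {q | ∀ m n, 1 ≤ m → q.1 m ≠ q.2 n} = 0 := by
  have hshift : ((P u).prod ((P u).map shift)) {q | ∀ m n, 1 ≤ m → q.1 m ≠ q.2 n} = 0 := by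
    rw [← Measure.map_id (μ := P u), Measure.map_prod_map _ _ measurable_id measurable_shift,
      Measure.map_id, Measure.map_apply (measurable_id.prodMap measurable_shift)
        measurableSet_avoid, preimage_prodMap_shift_avoid, prob_compl_eq_zero_iff, hcoll]
    refine MeasurableSet.of_compl ?_
    rw [← preimage_prodMap_shift_avoid]
    exact (measurable_id.prodMap measurable_shift) measurableSet_avoid
  have hle : K u {v} • (P u).prod (P v) ≤ (P u).prod ((P u).map shift) := by
    rw [← Measure.prod_smul_right, IsPathLaw.map_shift hP]
    exact Measure.prod_mono le_rfl (Measure.le_sum (fun y => K u {y} • P y) v)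
  simpa [huv] using (hle _).trans_eq hshift

end MarkovChain

lemma pathPrefix_ancLine_eq_iff {n : ℕ} {f : G → G} {c : Fin (n + 1) → G} :
    pathPrefix n (ancLine (c 0, f)) = c ↔ ∀ i : Fin n, f (c i.castSucc) = c i.succ := by
  refine ⟨fun h i => ?_, fun h => funext fun i => ?_⟩
  · rw [← h]
    exact (iterate_succ_apply' f i (c 0)).symm
  · induction i using Fin.induction with
    | zero => rfl
    | succ i ih =>
      rw [← h i, ← ih]
      exact iterate_succ_apply' f i (c 0)

lemma pathPrefix_ancLine_ne {n : ℕ} {x : G} {c : Fin (n + 1) → G} (h : c 0 ≠ x) (f : G → G) :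
    pathPrefix n (ancLine (x, f)) ≠ c :=
  fun hf => h (hf ▸ rfl)

lemma exists_first_repeat {s : ℕ → G} (hs : ¬ Injective s) :
    ∃ m, Injective (fun i : Fin m => s i) ∧ ∃ k : Fin m, s m = s k := by
  classical
  have hrep : ∃ m, ∃ k : Fin m, s m = s k := by
    obtain ⟨i, j, hij, hne⟩ := not_injective_iff.mp hs
    rcases lt_or_gt_of_ne hne with h | h
    · exact ⟨j, ⟨i, h⟩, hij.symm⟩
    · exact ⟨i, ⟨j, h⟩, hij⟩
  refine ⟨Nat.find hrep, fun i j hij => ?_, Nat.find_spec hrep⟩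
  by_contra hne
  rcases lt_or_gt_of_ne hne with h | h
  · exact Nat.find_min hrep j.is_lt ⟨⟨i, h⟩, hij.symm⟩
  · exact Nat.find_min hrep i.is_lt ⟨⟨j, h⟩, hij⟩

section CMT

variable [MeasurableSpace G] {K : G → Measure G} {μ : Measure (G → G)}

namespace IsCMTLaw

lemma measure_forall_apply_eq (hμ : IsCMTLaw K μ) {ι : Type*} [Fintype ι] {a : ι → G}
    (ha : Injective a) (b : ι → G) :
    μ {f | ∀ k, f (a k) = b k} = ∏ k, K (a k) {b k} := by
  simpa [ha.extend_apply] using hμ (Finset.univ.map ⟨a, ha⟩) (extend a b id)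

lemma measure_pathPrefix_ancLine (hμ : IsCMTLaw K μ) {n : ℕ} {c : Fin (n + 1) → G}
    (hc : Injective (c ∘ Fin.castSucc)) :
    μ {f | pathPrefix n (ancLine (c 0, f)) = c} = pathWeight K c := by
  simp_rw [pathPrefix_ancLine_eq_iff]
  exact hμ.measure_forall_apply_eq hc _

lemma measure_pathPrefix_ancLine_pair (hμ : IsCMTLaw K μ) {n : ℕ} {c d : Fin (n + 1) → G}
    (hcd : Injective (Sum.elim (c ∘ Fin.castSucc) (d ∘ Fin.castSucc))) :
    μ {f | pathPrefix n (ancLine (c 0, f)) = c ∧ pathPrefix n (ancLine (d 0, f)) = d} =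
      pathWeight K c * pathWeight K d := by
  simp_rw [pathPrefix_ancLine_eq_iff]
  have := hμ.measure_forall_apply_eq hcd (Sum.elim (c ∘ Fin.succ) (d ∘ Fin.succ))
  simpa [Sum.forall, Fintype.prod_sum_type, pathWeight] using this

end IsCMTLaw

variable [Countable G] [MeasurableSingletonClass G]

lemma measurable_iterate_apply (n : ℕ) (x : G) : Measurable fun f : G → G => f^[n] x := by
  induction n with
  | zero => exact measurable_const
  | succ n ih =>
    simp only [iterate_succ_apply']
    exact (measurable_from_prod_countable_left (f := fun p : (G → G) × G => p.1 p.2)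
      fun y => measurable_pi_apply y).comp (measurable_id.prodMk ih)

lemma measurable_pathPrefix_ancLine (n : ℕ) (x : G) :
    Measurable fun f : G → G => pathPrefix n (ancLine (x, f)) :=
  measurable_pi_lambda _ fun i => measurable_iterate_apply i x

variable {P : G → Measure (ℕ → G)} [∀ x, IsProbabilityMeasure (P x)]

theorem IsCMTLaw.measure_pathPrefix_ancLine_mem (hμ : IsCMTLaw K μ)
    (hP : ∀ x, IsPathLaw K x (P x)) (x : G) {n : ℕ} {C : Set (Fin (n + 1) → G)}
    (hC : ∀ c ∈ C, Injective (c ∘ Fin.castSucc)) :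
    μ {f | pathPrefix n (ancLine (x, f)) ∈ C} = P x (pathPrefix n ⁻¹' C) := by
  refine measure_preimage_eq_of_fiber_eq (measurable_pathPrefix_ancLine n x)
    (measurable_pathPrefix n) fun c hc => ?_
  rw [(hP x).measure_pathPrefix_singleton]
  split_ifs with hc0
  · subst hc0
    exact hμ.measure_pathPrefix_ancLine (hC c hc)
  · exact measure_mono_null (fun f hf => pathPrefix_ancLine_ne hc0 f hf) measure_empty

theorem IsCMTLaw.measure_pathPrefix_ancLine_pair_mem (hμ : IsCMTLaw K μ)
    (hP : ∀ x, IsPathLaw K x (P x)) (u v : G) {n : ℕ}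
    {C : Set ((Fin (n + 1) → G) × (Fin (n + 1) → G))}
    (hC : ∀ cd ∈ C, Injective (Sum.elim (cd.1 ∘ Fin.castSucc) (cd.2 ∘ Fin.castSucc))) :
    μ {f | (pathPrefix n (ancLine (u, f)), pathPrefix n (ancLine (v, f))) ∈ C} =
      (P u).prod (P v) (Prod.map (pathPrefix n) (pathPrefix n) ⁻¹' C) := by
  refine measure_preimage_eq_of_fiber_eq
    ((measurable_pathPrefix_ancLine n u).prodMk (measurable_pathPrefix_ancLine n v))
    ((measurable_pathPrefix n).prodMap (measurable_pathPrefix n)) fun ⟨c, d⟩ hcd => ?_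
  rw [← singleton_prod_singleton, preimage_prod_map_prod, Measure.prod_prod,
    (hP u).measure_pathPrefix_singleton, (hP v).measure_pathPrefix_singleton, mk_preimage_prod]
  split_ifs with hc0 hd0 hd0
  · subst hc0 hd0
    exact hμ.measure_pathPrefix_ancLine_pair (hC _ hcd)
  · rw [mul_zero]
    exact measure_mono_null (fun f hf => pathPrefix_ancLine_ne hd0 f hf.2) measure_empty
  · rw [zero_mul]
    exact measure_mono_null (fun f hf => pathPrefix_ancLine_ne hc0 f hf.1) measure_empty
  · rw [zero_mul]
    exact measure_mono_null (fun f hf => pathPrefix_ancLine_ne hc0 f hf.1) measure_empty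

theorem measure_not_injective_ancLine_eq_zero (hμ : IsCMTLaw K μ)
    (hP : ∀ x, IsPathLaw K x (P x)) (hcf : CycleFree K) (x : G) :
    μ {f | ¬ Injective (ancLine (x, f))} = 0 := by
  let R (m : ℕ) : Set (Fin (m + 1) → G) :=
    {c | Injective (c ∘ Fin.castSucc) ∧ ∃ k : Fin m, c (Fin.last m) = c k.castSucc}
  have hsub : {f | ¬ Injective (ancLine (x, f))} ⊆
      ⋃ m, {f | pathPrefix m (ancLine (x, f)) ∈ R m} := fun f hf =>
    mem_iUnion.mpr (exists_first_repeat hf)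
  refine measure_mono_null hsub (measure_iUnion_null fun m => ?_)
  rw [hμ.measure_pathPrefix_ancLine_mem hP x fun c hc => hc.1]
  refine measure_mono_null (fun ω ⟨_, k, hk⟩ => mem_iUnion.mpr ⟨k, hk.symm⟩)
    (measure_iUnion_null fun k : Fin m => hcf.measure_revisit_eq_zero hP k.is_lt x)

theorem measure_iInter_injective_pathPrefix_ancLine_eq_zero (hμ : IsCMTLaw K μ)
    (hP : ∀ x, IsPathLaw K x (P x)) {u v : G}
    (hcoll : ((P u).prod (P u)) {q | (collisions q.1 q.2).Nonempty} = 1) (huv : K u {v} ≠ 0) :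
    μ (⋂ M, {f | Injective (Sum.elim (pathPrefix M (ancLine (u, f)))
      (pathPrefix M (ancLine (v, f))))}) = 0 := by
  let A (M : ℕ) : Set ((ℕ → G) × (ℕ → G)) :=
    Prod.map (pathPrefix M) (pathPrefix M) ⁻¹' {cd | ∀ i j, cd.1 i ≠ cd.2 j}
  have hinj_le (M : ℕ) : μ {f | Injective (Sum.elim (pathPrefix M (ancLine (u, f)))
      (pathPrefix M (ancLine (v, f))))} ≤ (P u).prod (P v) (A M) := by
    have hC (cd : (Fin (M + 1) → G) × (Fin (M + 1) → G)) (hcd : Injective (Sum.elim cd.1 cd.2)) :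
        Injective (Sum.elim (cd.1 ∘ Fin.castSucc) (cd.2 ∘ Fin.castSucc)) := by
      rw [← Sum.elim_comp_map]
      exact hcd.comp (Sum.map_injective.mpr ⟨Fin.castSucc_injective _, Fin.castSucc_injective _⟩)
    exact (hμ.measure_pathPrefix_ancLine_pair_mem hP u v hC).trans_le
      (measure_mono fun q hq i j => Injective.ne hq Sum.inl_ne_inr)
  have hA_anti : Antitone A := fun M N hMN q hq i j =>
    hq (i.castLE (by omega)) (j.castLE (by omega))
  have hA_meas (M : ℕ) : NullMeasurableSet (A M) ((P u).prod (P v)) :=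
    (((measurable_pathPrefix M).prodMap (measurable_pathPrefix M)) .of_discrete).nullMeasurableSet
  have hA : (P u).prod (P v) (⋂ M, A M) = 0 := by
    refine measure_mono_null ?_ (measure_avoid_eq_zero hP hcoll huv)
    intro q hq m n _
    exact mem_iInter.mp hq (m + n) ⟨m, by omega⟩ ⟨n, by omega⟩
  refine le_antisymm ?_ zero_le
  calc μ (⋂ M, _) ≤ ⨅ M, (P u).prod (P v) (A M) :=
        le_iInf fun M => (measure_mono (iInter_subset _ M)).trans (hinj_le M)
    _ = 0 := by rw [← hA_anti.measure_iInter hA_meas ⟨0, measure_ne_top _ _⟩, hA]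

theorem measure_ancLine_disjoint_eq_zero (hμ : IsCMTLaw K μ) (hP : ∀ x, IsPathLaw K x (P x))
    (hcf : CycleFree K) {u v : G}
    (hcoll : ((P u).prod (P u)) {q | (collisions q.1 q.2).Nonempty} = 1) (huv : K u {v} ≠ 0) :
    μ {f | ∀ i j, ancLine (u, f) i ≠ ancLine (v, f) j} = 0 := by
  have hsub : {f | ∀ i j, ancLine (u, f) i ≠ ancLine (v, f) j} ⊆
      {f | ¬ Injective (ancLine (u, f))} ∪ {f | ¬ Injective (ancLine (v, f))} ∪
        ⋂ M, {f | Injective (Sum.elim (pathPrefix M (ancLine (u, f)))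
          (pathPrefix M (ancLine (v, f))))} := by
    intro f hf
    by_cases hu : Injective (ancLine (u, f))
    · by_cases hv : Injective (ancLine (v, f))
      · exact .inr <| mem_iInter.mpr fun M => Sum.elim_injective.mpr
          ⟨hu.comp Fin.val_injective, hv.comp Fin.val_injective, fun i j => hf i j⟩
      · exact .inl (.inr hv)
    · exact .inl (.inl hu)
  exact measure_mono_null hsub <| measure_union_null
    (measure_union_null (measure_not_injective_ancLine_eq_zero hμ hP hcf u)
      (measure_not_injective_ancLine_eq_zero hμ hP hcf v))
    (measure_iInter_injective_pathPrefix_ancLine_eq_zero hμ hP hcoll huv)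

end CMT

lemma sameComponent_iterate (f : G → G) (x : G) : ∀ n, SameComponent f x (f^[n] x)
  | 0 => .refl
  | n + 1 => (sameComponent_iterate f x n).tail (.inl (iterate_succ_apply' f n x).symm)

lemma SameComponent.symm {f : G → G} {a b : G} (h : SameComponent f a b) :
    SameComponent f b a := by
  induction h with
  | refl => exact .refl
  | tail _ hcd ih => exact .head hcd.symm ih

lemma sameComponent_of_iterate_eq {f : G → G} {a b : G} {i j : ℕ} (h : f^[i] a = f^[j] b) :
    SameComponent f a b :=
  (sameComponent_iterate f a i).trans (h ▸ (sameComponent_iterate f b j).symm)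

theorem ae_sameComponent_of_ne_zero [MeasurableSpace G] [Countable G] [MeasurableSingletonClass G]
    {K : G → Measure G} {μ : Measure (G → G)} {P : G → Measure (ℕ → G)}
    [∀ x, IsProbabilityMeasure (P x)] (hμ : IsCMTLaw K μ) (hP : ∀ x, IsPathLaw K x (P x))
    (hcf : CycleFree K) {u v : G}
    (hcoll : ((P u).prod (P u)) {q | (collisions q.1 q.2).Nonempty} = 1) (huv : K u {v} ≠ 0) :
    ∀ᵐ f ∂μ, SameComponent f u v := by
  filter_upwards [measure_eq_zero_iff_ae_notMem.mp
    (measure_ancLine_disjoint_eq_zero hμ hP hcf hcoll huv)] with f hf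
  simp only [not_forall, not_not] at hf
  obtain ⟨i, j, hij⟩ := hf
  exact sameComponent_of_iterate_eq hij

theorem cmt_connected_general
    [Countable G] [MeasurableSpace G] [MeasurableSingletonClass G]
    (K : G → Measure G) (hcf : CycleFree K)
    (hirr : ∀ u v : G, Relation.ReflTransGen (fun a b => 0 < K a {b} + K b {a}) u v)
    (P : G → Measure (ℕ → G)) [∀ x, IsProbabilityMeasure (P x)]
    (hP : ∀ x, IsPathLaw K x (P x))
    (hcoll : ∀ z : G, ((P z).prod (P z)) {q | (collisions q.1 q.2).Nonempty} = 1)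
    (μ : Measure (G → G)) (hμ : IsCMTLaw K μ) :
    ∀ᵐ f ∂μ, ∀ u v : G, SameComponent f u v := by
  have hedge : ∀ᵐ f ∂μ, ∀ a b : G, 0 < K a {b} + K b {a} → SameComponent f a b := by
    refine ae_all_iff.mpr fun a => ae_all_iff.mpr fun b => ?_
    rcases eq_or_ne (K a {b}) 0 with hab | hab
    · rcases eq_or_ne (K b {a}) 0 with hba | hba
      · exact .of_forall fun f h => absurd h (by simp [hab, hba])
      · filter_upwards [ae_sameComponent_of_ne_zero hμ hP hcf (hcoll b) hba] with f hf
        exact fun _ => hf.symm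
    · filter_upwards [ae_sameComponent_of_ne_zero hμ hP hcf (hcoll a) hab] with f hf
      exact fun _ => hf
  filter_upwards [hedge] with f hf u v
  exact (hirr u v).lift' id hf

/-- Under weak irreducibility and the almost sure collision property, the
graph of the CMT with kernel `K` is a.s. connected. -/
theorem cmt_connected
    [Countable G] [MeasurableSpace G] [MeasurableSingletonClass G]
    (K : G → Measure G) (hK : ∀ x, IsProbabilityMeasure (K x)) (hcf : CycleFree K)
    (hirr : ∀ u v : G, Relation.ReflTransGen (fun a b => 0 < K a {b} + K b {a}) u v)
    (P : G → Measure (ℕ → G)) [∀ x, IsProbabilityMeasure (P x)]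
    (hP : ∀ x, IsPathLaw K x (P x))
    (hcoll : ∀ z : G, ((P z).prod (P z)) {q | (collisions q.1 q.2).Nonempty} = 1)
    (μ : Measure (G → G)) [IsProbabilityMeasure μ] (hμ : IsCMTLaw K μ) :
    ∀ᵐ f ∂μ, ∀ u v : G, SameComponent f u v :=
  cmt_connected_general K hcf hirr P hP hcoll μ hμ

end CMTPaper
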